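/- arXiv:1207.2015 — 3 statements merged into one kernel-verified Lean document; each statement's English description precedes it below -/
import Mathlib

section
/- Let A be a unital C*-algebra and let ‖·‖' be a submultiplicative *-invariant norm on A with ‖x‖' ≤ ‖x‖ for all x, such that any ‖·‖-Cauchy sequence converging to 0 in ‖·‖' also converges to 0 in ‖·‖. Then the two norms are equivalent; in fact ‖x‖ ≤ ‖x‖' for all x, so the norms coincide on self-adjoint elements up to equivalence. -/
/-!
For self-adjoint `a` and `t > p a`, a continuous `g` vanishing below `t` factors as
`g(a) = hₘ(a) aᵐ` with `hₘ(s) = g(s) / max(s, t)ᵐ`, so `‖hₘ(a)‖ ≤ ‖g(a)‖ t⁻ᵐ` and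
`p (g(a)) ≤ ‖g(a)‖ (p a / t)ᵐ → 0`. As `p` is definite, `g(a) = 0`, and taking `g = (· - t)⁺`
shows that the spectrum of `a` lies below `p a`. For `a = x⋆x`, whose spectrum contains
`‖x⋆x‖ = ‖x‖²`, this gives `‖x‖² ≤ p (x⋆x) ≤ p x ^ 2`.
-/

open Filter Topology

theorem cfc_eq_cfc_mul_pow_of_eq_zero_of_lt {A : Type*} [Ring A] [StarRing A] [Algebra ℝ A]
    [TopologicalSpace A] [ContinuousFunctionalCalculus ℝ A IsSelfAdjoint]
    {a : A} (ha : IsSelfAdjoint a) {t : ℝ} (ht : 0 < t) {g : ℝ → ℝ} (hg : Continuous g)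
    (hg_zero : ∀ s < t, g s = 0) (m : ℕ) :
    cfc g a = cfc (fun s => g s * (max s t)⁻¹ ^ m) a * a ^ m := by
  have hmax : ∀ s, max s t ≠ 0 := fun s => (ht.trans_le (le_max_right s t)).ne'
  rw [← cfc_pow_id (R := ℝ) a m, ← cfc_mul _ _ a (by fun_prop (disch := exact hmax))]
  refine cfc_congr fun s _ => ?_
  rcases lt_or_ge s t with hst | hst
  · simp [hg_zero s hst]
  · rw [max_eq_left hst, mul_assoc, ← mul_pow, inv_mul_cancel₀ (ht.trans_le hst).ne', one_pow,
      mul_one]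

theorem norm_cfc_mul_inv_max_pow_le {A : Type*} [CStarAlgebra A] {a : A} (ha : IsSelfAdjoint a)
    {t : ℝ} (ht : 0 < t) {g : ℝ → ℝ} (hg : Continuous g) (m : ℕ) :
    ‖cfc (fun s => g s * (max s t)⁻¹ ^ m) a‖ ≤ ‖cfc g a‖ * t⁻¹ ^ m := by
  refine norm_cfc_le (by positivity) fun s hs => ?_
  have hmax : 0 < max s t := ht.trans_le (le_max_right s t)
  rw [norm_mul, norm_pow, Real.norm_of_nonneg (inv_nonneg.mpr hmax.le)]
  gcongr
  · exact norm_apply_le_norm_cfc g a hs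
  · exact le_max_right s t

theorem pow_succ_le_of_mul_le {M : Type*} [Monoid M] (p : M → ℝ) (p_nonneg : ∀ x, 0 ≤ p x)
    (p_mul : ∀ x y, p (x * y) ≤ p x * p y) (a : M) (m : ℕ) :
    p (a ^ (m + 1)) ≤ p a ^ (m + 1) := by
  induction m with
  | zero => simp
  | succ m ih =>
    calc p (a ^ (m + 2)) ≤ p (a ^ (m + 1)) * p a := pow_succ a (m + 1) ▸ p_mul _ _
      _ ≤ p a ^ (m + 1) * p a := by gcongr; exact p_nonneg a
      _ = p a ^ (m + 2) := (pow_succ _ _).symm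

theorem apply_cfc_eq_zero_of_lt {A : Type*} [CStarAlgebra A] (p : A → ℝ)
    (p_nonneg : ∀ x, 0 ≤ p x) (p_mul : ∀ x y, p (x * y) ≤ p x * p y) (p_le : ∀ x, p x ≤ ‖x‖)
    {a : A} (ha : IsSelfAdjoint a) {t : ℝ} (hpt : p a < t) {g : ℝ → ℝ} (hg : Continuous g)
    (hg_zero : ∀ s < t, g s = 0) :
    p (cfc g a) = 0 := by
  have ht : 0 < t := (p_nonneg a).trans_lt hpt
  have hbound (m : ℕ) : p (cfc g a) ≤ ‖cfc g a‖ * (p a / t) ^ (m + 1) :=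
    calc p (cfc g a)
        ≤ p (cfc (fun s => g s * (max s t)⁻¹ ^ (m + 1)) a) * p (a ^ (m + 1)) := by
          rw [cfc_eq_cfc_mul_pow_of_eq_zero_of_lt ha ht hg hg_zero (m + 1)]
          exact p_mul _ _
      _ ≤ ‖cfc g a‖ * t⁻¹ ^ (m + 1) * p a ^ (m + 1) := by
          gcongr
          · exact p_nonneg _
          · exact (p_le _).trans (norm_cfc_mul_inv_max_pow_le ha ht hg _)
          · exact pow_succ_le_of_mul_le p p_nonneg p_mul a m
      _ = ‖cfc g a‖ * (p a / t) ^ (m + 1) := by rw [div_eq_mul_inv, mul_pow]; ring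
  have hratio : Tendsto (fun m : ℕ => ‖cfc g a‖ * (p a / t) ^ (m + 1)) atTop (𝓝 0) := by
    simpa using ((tendsto_pow_atTop_nhds_zero_of_lt_one (div_nonneg (p_nonneg a) ht.le)
      ((div_lt_one ht).mpr hpt)).comp (tendsto_add_atTop_nat 1)).const_mul ‖cfc g a‖
  exact le_antisymm (ge_of_tendsto' hratio hbound) (p_nonneg _)

theorem le_apply_of_mem_spectrum {A : Type*} [CStarAlgebra A] (p : A → ℝ)
    (p_nonneg : ∀ x, 0 ≤ p x) (p_eq_zero : ∀ x, p x = 0 → x = 0)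
    (p_mul : ∀ x y, p (x * y) ≤ p x * p y) (p_le : ∀ x, p x ≤ ‖x‖) {a : A} (ha : IsSelfAdjoint a)
    {s : ℝ} (hs : s ∈ spectrum ℝ a) :
    s ≤ p a := by
  by_contra! hps
  set t := (p a + s) / 2 with ht
  have hg : Continuous fun r : ℝ => max 0 (r - t) := by fun_prop
  have hcfc : cfc (fun r : ℝ => max 0 (r - t)) a = 0 :=
    p_eq_zero _ <| apply_cfc_eq_zero_of_lt p p_nonneg p_mul p_le ha (t := t) (by linarith) hg
      fun r hr => max_eq_left (by linarith)
  have hnorm := norm_apply_le_norm_cfc (fun r : ℝ => max 0 (r - t)) a hs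
  rw [hcfc, norm_zero, Real.norm_of_nonneg (le_max_left _ _)] at hnorm
  linarith [le_max_right 0 (s - t)]

theorem norm_star_mul_self_mem_spectrum {A : Type*} [CStarAlgebra A] [Nontrivial A] (x : A) :
    ‖star x * x‖ ∈ spectrum ℝ (star x * x) := by
  refine (CStarAlgebra.norm_or_neg_norm_mem_spectrum (.star_mul_self x)).elim id fun h => ?_
  have hzero : ‖star x * x‖ = 0 :=
    le_antisymm (neg_nonneg.mp (spectrum_star_mul_self_nonneg _ h)) (norm_nonneg _)
  rw [hzero, neg_zero] at h
  rwa [hzero]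

theorem stmt_1_general {A : Type*} [CStarAlgebra A] (p : A → ℝ)
    (p_nonneg : ∀ x, 0 ≤ p x)
    (p_eq_zero : ∀ x, p x = 0 → x = 0)
    (p_mul : ∀ x y, p (x * y) ≤ p x * p y)
    (p_star : ∀ x, p (star x) = p x)
    (p_le : ∀ x, p x ≤ ‖x‖) :
    ∀ x : A, ‖x‖ ≤ p x := by
  intro x
  rcases subsingleton_or_nontrivial A with hA | hA
  · simpa [Subsingleton.elim x 0] using p_nonneg 0
  have hsq : ‖x‖ * ‖x‖ ≤ p x * p x :=
    calc ‖x‖ * ‖x‖ = ‖star x * x‖ := CStarRing.norm_star_mul_self.symm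
      _ ≤ p (star x * x) := le_apply_of_mem_spectrum p p_nonneg p_eq_zero p_mul p_le
          (.star_mul_self x) (norm_star_mul_self_mem_spectrum x)
      _ ≤ p x * p x := (p_mul _ _).trans_eq (by rw [p_star])
  exact (mul_self_le_mul_self_iff (norm_nonneg x) (p_nonneg x)).mpr hsq

/-- Let `A` be a unital C*-algebra and `p` a submultiplicative, *-invariant norm
on `A` with `p x ≤ ‖x‖`, such that every `‖·‖`-Cauchy sequence with `p x_n → 0`
satisfies `‖x_n‖ → 0` (compatibility). Then `‖x‖ ≤ p x` for all `x`, so the two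
norms coincide. -/
theorem stmt_1 {A : Type*} [CStarAlgebra A] (p : A → ℝ)
    (p_nonneg : ∀ x, 0 ≤ p x)
    (p_eq_zero : ∀ x, p x = 0 → x = 0)
    (p_add : ∀ x y, p (x + y) ≤ p x + p y)
    (p_smul : ∀ (c : ℂ) (x : A), p (c • x) = ‖c‖ * p x)
    (p_mul : ∀ x y, p (x * y) ≤ p x * p y)
    (p_star : ∀ x, p (star x) = p x)
    (p_le : ∀ x, p x ≤ ‖x‖)
    (compat : ∀ x : ℕ → A, CauchySeq x → Tendsto (fun n => p (x n)) atTop (𝓝 0) →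
      Tendsto (fun n => ‖x n‖) atTop (𝓝 0)) :
    ∀ x : A, ‖x‖ ≤ p x :=
  stmt_1_general p p_nonneg p_eq_zero p_mul p_star p_le
end

section
/- There does not exist a normed *-algebra B (with submultiplicative *-invariant norm) containing a unital C*-algebra A as a proper dense *-subalgebra with the norm of B dominated by the C*-norm on A and the two norms compatible. -/
/-!
An injective contractive *-homomorphism `φ` out of a C*-algebra is isometric. For self-adjoint `h`
pick `c ∈ σ(h)` with `|c| = ‖h‖`; functional calculus with bumps around `c` gives `z` with `‖z‖ ≤ 1`,
`h z ≈ c z`, and `z w = w` for some `w ≠ 0`. Injectivity keeps `φ w ≠ 0`, which forces `‖φ z‖ = 1`,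
hence `‖h‖ = ‖φ (c z)‖ ≲ ‖φ h‖`. The C*-identity extends this to all elements, and an isometric
image of a complete space is closed, so a dense one is everything.
-/

open Filter Topology

lemma exists_bump_pair (c : ℝ) {ε : ℝ} (hε : 0 < ε) :
    ∃ g g' : ℝ → ℝ, Continuous g ∧ Continuous g' ∧ (∀ t, |g t| ≤ 1) ∧
      (∀ t, g t * g' t = g' t) ∧ g' c = 1 ∧ ∀ t, |(t - c) * g t| ≤ ε := by
  set g : ℝ → ℝ := fun t => min 1 (max 0 (2 - 2 * |t - c| / ε))
  have hg_le : ∀ t, |g t| ≤ 1 := fun t => by rw [abs_le]; constructor <;> simp [g]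
  refine ⟨g, fun t => max 0 (1 - 4 * |t - c| / ε), by fun_prop, by fun_prop, hg_le,
    fun t => ?_, by simp, fun t => ?_⟩
  · rcases le_total (ε / 4) |t - c| with h | h
    · have : 1 - 4 * |t - c| / ε ≤ 0 := by rw [sub_nonpos, le_div_iff₀ hε]; linarith
      simp [max_eq_left this]
    · have : 1 ≤ 2 - 2 * |t - c| / ε := by rw [le_sub_comm, div_le_iff₀ hε]; linarith
      simp [g, min_eq_left (le_max_of_le_right this)]
  · rw [abs_mul]
    rcases le_total ε |t - c| with h | h
    · have : 2 - 2 * |t - c| / ε ≤ 0 := by rw [sub_nonpos, le_div_iff₀ hε]; linarith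
      simp [g, max_eq_left this, hε.le]
    · simpa using mul_le_mul h (hg_le t) (abs_nonneg _) hε.le

lemma one_le_norm_of_mul_eq_right {R : Type*} [NonUnitalNormedRing R] {z w : R} (hw : w ≠ 0)
    (hzw : z * w = w) : 1 ≤ ‖z‖ :=
  le_of_mul_le_mul_right (by simpa [hzw] using norm_mul_le z w) (norm_pos_iff.mpr hw)

section CStarAlgebra

variable {A : Type*} [CStarAlgebra A]

lemma IsSelfAdjoint.exists_abs_eq_norm_mem_spectrum [Nontrivial A] {h : A}
    (hh : IsSelfAdjoint h) : ∃ c ∈ spectrum ℝ h, |c| = ‖h‖ := by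
  rcases CStarAlgebra.norm_or_neg_norm_mem_spectrum hh with hmem | hmem
  · exact ⟨_, hmem, abs_norm h⟩
  · exact ⟨_, hmem, by rw [abs_neg, abs_norm]⟩

lemma IsSelfAdjoint.exists_approx_eigenvector {h : A} (hh : IsSelfAdjoint h) {c : ℝ}
    (hc : c ∈ spectrum ℝ h) {ε : ℝ} (hε : 0 < ε) :
    ∃ z w : A, ‖z‖ ≤ 1 ∧ w ≠ 0 ∧ z * w = w ∧ ‖h * z - c • z‖ ≤ ε := by
  obtain ⟨g, g', hg, hg', hg_le, hgg', hg'c, hg_ev⟩ := exists_bump_pair c hε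
  refine ⟨cfc g h, cfc g' h, norm_cfc_le zero_le_one fun t _ => hg_le t, fun hw => ?_, ?_, ?_⟩
  · have := norm_apply_le_norm_cfc g' h hc
    rw [hg'c, hw] at this
    norm_num at this
  · rw [← cfc_mul g g' h]
    exact cfc_congr fun t _ => hgg' t
  · have : h * cfc g h - c • cfc g h = cfc (fun t => (t - c) * g t) h := by
      simp_rw [sub_mul]
      rw [cfc_sub (fun t => t * g t) (fun t => c * g t) h, cfc_mul (fun t => t) g h, cfc_id' ℝ h,
        cfc_const_mul c g h]
    rw [this]
    exact norm_cfc_le hε.le fun t _ => hg_ev t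

variable {B F : Type*} [NormedRing B] [NormedAlgebra ℂ B] [FunLike F A B]

lemma norm_le_norm_map_of_isSelfAdjoint [AlgHomClass F ℂ A B] {φ : F}
    (hinj : Function.Injective φ) (hle : ∀ a, ‖φ a‖ ≤ ‖a‖) {h : A} (hh : IsSelfAdjoint h) :
    ‖h‖ ≤ ‖φ h‖ := by
  nontriviality A
  obtain ⟨c, hc, hc_abs⟩ := hh.exists_abs_eq_norm_mem_spectrum
  refine le_of_forall_pos_le_add fun ε hε => ?_
  obtain ⟨z, w, hz, hw, hzw, hev⟩ := hh.exists_approx_eigenvector hc hε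
  have hφz : ‖φ z‖ = 1 := by
    refine le_antisymm ((hle z).trans hz) (one_le_norm_of_mul_eq_right (w := φ w) ?_ ?_)
    · exact (map_ne_zero_iff φ hinj).mpr hw
    · rw [← map_mul, hzw]
  calc ‖h‖ = ‖φ (c • z)‖ := by
        rw [← Complex.coe_smul, map_smul, norm_smul, hφz, mul_one, Complex.norm_real,
          Real.norm_eq_abs, hc_abs]
    _ ≤ ‖φ (h * z)‖ + ‖φ (h * z) - φ (c • z)‖ := norm_le_insert _ _
    _ ≤ ‖φ h‖ * ‖φ z‖ + ‖h * z - c • z‖ := by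
        gcongr
        · exact map_mul φ h z ▸ norm_mul_le _ _
        · exact map_sub φ _ _ ▸ hle _
    _ ≤ ‖φ h‖ + ε := by rw [hφz, mul_one]; gcongr

lemma norm_map_eq_of_injective [AlgHomClass F ℂ A B] [StarRing B] [NormedStarGroup B]
    [StarHomClass F A B] {φ : F} (hinj : Function.Injective φ) (hle : ∀ a, ‖φ a‖ ≤ ‖a‖) (a : A) :
    ‖φ a‖ = ‖a‖ := by
  refine le_antisymm (hle a) ?_
  have : ‖a‖ * ‖a‖ ≤ ‖φ a‖ * ‖φ a‖ :=
    calc ‖a‖ * ‖a‖ = ‖star a * a‖ := CStarRing.norm_star_mul_self.symm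
      _ ≤ ‖φ (star a * a)‖ := norm_le_norm_map_of_isSelfAdjoint hinj hle (.star_mul_self a)
      _ ≤ ‖φ a‖ * ‖φ a‖ := by
        rw [map_mul, map_star]
        exact (norm_mul_le _ _).trans_eq (by rw [norm_star])
  exact (mul_self_le_mul_self_iff (norm_nonneg _) (norm_nonneg _)).mpr this

end CStarAlgebra

lemma Isometry.surjective_of_denseRange {α β : Type*} [EMetricSpace α] [CompleteSpace α]
    [EMetricSpace β] {f : α → β} (hf : Isometry f) (hd : DenseRange f) : Function.Surjective f :=
  Set.range_eq_univ.mp <| by rw [← hf.isClosedEmbedding.isClosed_range.closure_eq, hd.closure_range]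

theorem stmt_2_general {A B : Type*} [CStarAlgebra A]
    [NormedRing B] [StarRing B] [NormedStarGroup B] [NormedAlgebra ℂ B]
    (φ : A →⋆ₐ[ℂ] B) (hinj : Function.Injective φ) (hdense : DenseRange φ)
    (hle : ∀ a : A, ‖φ a‖ ≤ ‖a‖) :
    Function.Surjective φ ∧ ∀ a : A, ‖φ a‖ = ‖a‖ := by
  have hiso : ∀ a, ‖φ a‖ = ‖a‖ := norm_map_eq_of_injective hinj hle
  exact ⟨(AddMonoidHomClass.isometry_of_norm φ hiso).surjective_of_denseRange hdense, hiso⟩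

/-- There is no normed *-algebra containing a unital C*-algebra as a proper
dense *-subalgebra, with norm dominated by and compatible with the C*-norm:
if `φ : A → B` is an injective *-homomorphism with dense range, `‖φ a‖ ≤ ‖a‖`,
and every `‖·‖`-Cauchy sequence in `A` whose image tends to `0` in `B`'s norm
tends to `0` in `A`, then `φ` is surjective (so `A = B`) and isometric
(so the norms are equivalent). -/
theorem stmt_2 {A B : Type*} [CStarAlgebra A]
    [NormedRing B] [StarRing B] [NormedStarGroup B] [NormedAlgebra ℂ B] [StarModule ℂ B]
    (φ : A →⋆ₐ[ℂ] B) (hinj : Function.Injective φ) (hdense : DenseRange φ)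
    (hle : ∀ a : A, ‖φ a‖ ≤ ‖a‖)
    (compat : ∀ x : ℕ → A, CauchySeq x →
      Tendsto (fun n => ‖φ (x n)‖) atTop (𝓝 0) → Tendsto (fun n => ‖x n‖) atTop (𝓝 0)) :
    Function.Surjective φ ∧ ∀ a : A, ‖φ a‖ = ‖a‖ :=
  stmt_2_general φ hinj hdense hle
end

section
/- Let A be a unital C*-algebra, (p_λ) a family of seminorms on A satisfying: for each λ there exist λ' and γ_λ > 0 with p_λ(xy) ≤ γ_λ‖x‖ p_{λ'}(y) for all commuting x, y ∈ A. If (x_α) is a net of commuting positive elements that is Cauchy with respect to all p_λ, then the net ((1 + x_α)⁻¹) is also Cauchy with respect to all p_λ. -/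
/-!
Since the `x α` commute, `(1 + x i)⁻¹ - (1 + x j)⁻¹ = (1 + x i)⁻¹ (1 + x j)⁻¹ (x j - x i)` is a
product of commuting factors, and positivity gives `‖(1 + x α)⁻¹‖ ≤ 1`. Applying (T₃) twice
peels off the two inverses, so `p λ` of the left side is at most `γ λ γ λ' p λ'' (x i - x j)`.
-/

open Ring

theorem Commute.ringInverse_left {M₀ : Type*} [MonoidWithZero M₀] {a b : M₀}
    (h : Commute a b) : Commute a⁻¹ʳ b := by
  by_cases ha : IsUnit a
  · lift a to M₀ˣ using ha
    simpa using h.units_inv_left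
  · simp [inverse_non_unit _ ha]

/-- Condition (T₃). -/
def CommuteMulBound {𝕜 A Λ : Type*} [SeminormedRing 𝕜] [NormedRing A] [SMul 𝕜 A]
    (p : Λ → Seminorm 𝕜 A) (lam' : Λ → Λ) (γ : Λ → ℝ) : Prop :=
  ∀ l (x y : A), Commute x y → p l (x * y) ≤ γ l * ‖x‖ * p (lam' l) y

namespace CommuteMulBound

variable {𝕜 A Λ : Type*} [SeminormedRing 𝕜] [NormedRing A] [SMul 𝕜 A]
  {p : Λ → Seminorm 𝕜 A} {lam' : Λ → Λ} {γ : Λ → ℝ}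

theorem le_of_norm_le_one (hT3 : CommuteMulBound p lam' γ) (hγ : ∀ l, 0 ≤ γ l) (l : Λ)
    {u y : A} (hu : ‖u‖ ≤ 1) (huy : Commute u y) : p l (u * y) ≤ γ l * p (lam' l) y :=
  calc p l (u * y) ≤ γ l * ‖u‖ * p (lam' l) y := hT3 l u y huy
    _ ≤ γ l * 1 * p (lam' l) y := by gcongr; exact hγ l
    _ = γ l * p (lam' l) y := by rw [mul_one]

theorem ringInverse_sub_ringInverse_le (hT3 : CommuteMulBound p lam' γ) (hγ : ∀ l, 0 ≤ γ l)
    (l : Λ) {a b : A} (hab : Commute a b) (ha : IsUnit a) (hb : IsUnit b)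
    (ha₁ : ‖a⁻¹ʳ‖ ≤ 1) (hb₁ : ‖b⁻¹ʳ‖ ≤ 1) :
    p l (a⁻¹ʳ - b⁻¹ʳ) ≤ γ l * γ (lam' l) * p (lam' (lam' l)) (a - b) := by
  have hb_sub : Commute b⁻¹ʳ (b - a) := ((Commute.refl b).sub_right hab.symm).ringInverse_left
  have ha_prod : Commute a⁻¹ʳ (b⁻¹ʳ * (b - a)) :=
    (hab.ringInverse_ringInverse.mul_right ((hab.sub_right (Commute.refl a)).ringInverse_left))
  have hdiff : a⁻¹ʳ - b⁻¹ʳ = a⁻¹ʳ * (b⁻¹ʳ * (b - a)) := by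
    rw [inverse_sub_inverse (iff_of_true ha hb), mul_assoc, hb_sub.eq]
  calc p l (a⁻¹ʳ - b⁻¹ʳ) ≤ γ l * p (lam' l) (b⁻¹ʳ * (b - a)) := by
        rw [hdiff]; exact hT3.le_of_norm_le_one hγ l ha₁ ha_prod
    _ ≤ γ l * (γ (lam' l) * p (lam' (lam' l)) (b - a)) := by
        gcongr
        · exact hγ l
        · exact hT3.le_of_norm_le_one hγ (lam' l) hb₁ hb_sub
    _ = γ l * γ (lam' l) * p (lam' (lam' l)) (a - b) := by rw [map_sub_rev, mul_assoc]

end CommuteMulBound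

section CStarAlgebra

variable {A : Type*} [CStarAlgebra A] [PartialOrder A] [StarOrderedRing A]

theorem isUnit_one_add_of_nonneg {x : A} (hx : 0 ≤ x) : IsUnit (1 + x) :=
  CStarAlgebra.isUnit_of_le 1 (le_add_of_nonneg_right hx)

theorem norm_ringInverse_one_add_le_one {x : A} (hx : 0 ≤ x) : ‖(1 + x)⁻¹ʳ‖ ≤ 1 := by
  have hunit := isUnit_one_add_of_nonneg hx
  have hnonneg : 0 ≤ (1 + x)⁻¹ʳ :=
    (CFC.ringInverse_nonneg_iff_nonneg_of_isUnit hunit).mpr (add_nonneg zero_le_one hx)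
  rw [CStarAlgebra.norm_le_one_iff_of_nonneg _ hnonneg]
  simpa only [inverse_one] using CStarAlgebra.ringInverse_le_ringInverse (le_add_of_nonneg_right (a := 1) hx)

end CStarAlgebra

theorem cauchy_of_le_mul {ι : Type*} [Preorder ι] {d e : ι → ι → ℝ} {C : ℝ} (hC : 0 < C)
    (hle : ∀ i j, e i j ≤ C * d i j)
    (hd : ∀ δ : ℝ, 0 < δ → ∃ N, ∀ i j, N ≤ i → N ≤ j → d i j < δ) :
    ∀ δ : ℝ, 0 < δ → ∃ N, ∀ i j, N ≤ i → N ≤ j → e i j < δ := by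
  intro δ hδ
  obtain ⟨N, hN⟩ := hd (δ / C) (div_pos hδ hC)
  refine ⟨N, fun i j hi hj => ?_⟩
  calc e i j ≤ C * d i j := hle i j
    _ < C * (δ / C) := by gcongr; exact hN i j hi hj
    _ = δ := mul_div_cancel₀ δ hC.ne'

theorem stmt_8_general {A : Type*} [CStarAlgebra A] [PartialOrder A] [StarOrderedRing A]
    {Λ : Type*} (p : Λ → Seminorm ℂ A) (lam' : Λ → Λ) (γ : Λ → ℝ)
    (hγ : ∀ l, 0 < γ l)
    (hT3 : ∀ l (x y : A), Commute x y → p l (x * y) ≤ γ l * ‖x‖ * p (lam' l) y)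
    {ι : Type*} [SemilatticeSup ι] (x : ι → A)
    (hpos : ∀ i, 0 ≤ x i) (hcomm : ∀ i j, Commute (x i) (x j))
    (hcauchy : ∀ l, ∀ δ : ℝ, 0 < δ → ∃ N, ∀ i j, N ≤ i → N ≤ j → p l (x i - x j) < δ) :
    ∀ l, ∀ δ : ℝ, 0 < δ → ∃ N, ∀ i j, N ≤ i → N ≤ j →
      p l (Ring.inverse (1 + x i) - Ring.inverse (1 + x j)) < δ := by
  have hT3 : CommuteMulBound p lam' γ := hT3
  intro l
  refine cauchy_of_le_mul (mul_pos (hγ l) (hγ (lam' l))) (fun i j => ?_)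
    (hcauchy (lam' (lam' l)))
  rw [← add_sub_add_left_eq_sub (x i) (x j) 1]
  exact hT3.ringInverse_sub_ringInverse_le (fun l => (hγ l).le) l
    ((Commute.one_left _).add_left ((Commute.one_right _).add_right (hcomm i j)))
    (isUnit_one_add_of_nonneg (hpos i)) (isUnit_one_add_of_nonneg (hpos j))
    (norm_ringInverse_one_add_le_one (hpos i)) (norm_ringInverse_one_add_le_one (hpos j))

/-- Let `A` be a unital C*-algebra and `(p λ)` a family of seminorms satisfying
condition (T₃): for each `λ` there are `λ'` and `γ λ > 0` with
`p λ (xy) ≤ γ λ ‖x‖ p λ' (y)` for all commuting `x, y`. If `(x α)` is a net of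
pairwise commuting positive elements which is Cauchy for every `p λ`, then the
net `((1 + x α)⁻¹)` is Cauchy for every `p λ`. -/
theorem stmt_8 {A : Type*} [CStarAlgebra A] [PartialOrder A] [StarOrderedRing A]
    {Λ : Type*} (p : Λ → Seminorm ℂ A) (lam' : Λ → Λ) (γ : Λ → ℝ)
    (hγ : ∀ l, 0 < γ l)
    (hT3 : ∀ l (x y : A), Commute x y → p l (x * y) ≤ γ l * ‖x‖ * p (lam' l) y)
    {ι : Type*} [Nonempty ι] [SemilatticeSup ι] (x : ι → A)
    (hpos : ∀ i, 0 ≤ x i) (hcomm : ∀ i j, Commute (x i) (x j))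
    (hcauchy : ∀ l, ∀ δ : ℝ, 0 < δ → ∃ N, ∀ i j, N ≤ i → N ≤ j → p l (x i - x j) < δ) :
    ∀ l, ∀ δ : ℝ, 0 < δ → ∃ N, ∀ i j, N ≤ i → N ≤ j →
      p l (Ring.inverse (1 + x i) - Ring.inverse (1 + x j)) < δ :=
  stmt_8_general p lam' γ hγ hT3 x hpos hcomm hcauchy
end
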